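/- Let 𝓗 be a complex inner product space and let ψ, ψ' ∈ 𝓗 be unit vectors. Then 1 − |⟨ψ, ψ'⟩| ≤ ‖(id − P_ψ) ∘ P_{ψ'}‖, where P_ψ and P_{ψ'} are the orthogonal projections onto span(ψ) and span(ψ') respectively and ‖·‖ is the operator norm. -/

import Mathlib

/-- The orthogonal projection onto the span of a unit vector `χ` of a complex inner
product space, as a continuous linear map: `v ↦ ⟨χ, v⟩ • χ`. -/
noncomputable def projCLM {𝓗 : Type*} [NormedAddCommGroup 𝓗] [InnerProductSpace ℂ 𝓗]
    (χ : 𝓗) : 𝓗 →L[ℂ] 𝓗 :=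
  (innerSL ℂ χ).smulRight χ

section
variable {𝓗 : Type*} [NormedAddCommGroup 𝓗] [InnerProductSpace ℂ 𝓗]

theorem projCLM_apply (χ v : 𝓗) : projCLM χ v = inner ℂ χ v • χ := rfl

theorem projCLM_apply_self {χ : 𝓗} (hχ : ‖χ‖ = 1) : projCLM χ χ = χ := by
  rw [projCLM_apply, inner_self_eq_norm_sq_to_K, hχ]
  simp

end

theorem infidelity_le_opNorm_proj_comp
    {𝓗 : Type*} [NormedAddCommGroup 𝓗] [InnerProductSpace ℂ 𝓗]
    (ψ ψ' : 𝓗) (hψ : ‖ψ‖ = 1) (hψ' : ‖ψ'‖ = 1) :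
    1 - ‖(inner ℂ ψ ψ' : ℂ)‖ ≤
      ‖(ContinuousLinearMap.id ℂ 𝓗 - projCLM ψ).comp (projCLM ψ')‖ := by
  calc 1 - ‖(inner ℂ ψ ψ' : ℂ)‖ = ‖ψ'‖ - ‖(inner ℂ ψ ψ' : ℂ) • ψ‖ := by
        rw [hψ', norm_smul, hψ, mul_one]
    _ ≤ ‖ψ' - (inner ℂ ψ ψ' : ℂ) • ψ‖ := norm_sub_norm_le _ _
    _ = ‖(ContinuousLinearMap.id ℂ 𝓗 - projCLM ψ).comp (projCLM ψ') ψ'‖ := by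
        simp only [ContinuousLinearMap.comp_apply, projCLM_apply_self hψ',
          sub_apply, ContinuousLinearMap.id_apply, projCLM_apply]
    _ ≤ _ := ContinuousLinearMap.unit_le_opNorm _ _ hψ'.le
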